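/- arXiv:0812.2939 — 2 statements merged into one kernel-verified Lean document; each statement's English description precedes it below -/
import Mathlib

section
/- Let X be a real normed space, Y a real Banach space, p > 4 a real number and θ ≥ 0. Suppose f : X → Y satisfies f(0) = 0 and ‖D_f(x,y)‖ ≤ θ·(‖x‖^p + ‖y‖^p) for all x, y ∈ X. Then there exist a unique quadratic function Q₁ : X → Y, a unique cubic function C : X → Y and a unique quartic function Q₂ : X → Y such that ‖f(x) − Q₁(x) − C(x) − Q₂(x)‖ ≤ (((33 + 2^p)/36)·(1/(2^p − 4) + 1/(2^p − 16)) + 3/(2·(2^p − 8)))·θ·‖x‖^p for all x ∈ X. -/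
open Filter Topology

/-- The mixed quadratic-cubic-quartic functional equation (1.5). -/
def MixedEq {X Y : Type*} [AddCommGroup X] [AddCommGroup Y] (f : X → Y) : Prop :=
  ∀ x y : X, 3 • (f (x + 2 • y) + f (x - 2 • y)) =
    12 • (f (x + y) + f (x - y)) + 4 • f (3 • y) - 18 • f (2 • y) + 36 • f y - 18 • f x

/-- The difference operator D_f. -/
def Dop {X Y : Type*} [AddCommGroup X] [AddCommGroup Y] (f : X → Y) (x y : X) : Y :=
  3 • (f (x + 2 • y) + f (x - 2 • y)) - 12 • (f (x + y) + f (x - y))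
    - 4 • f (3 • y) + 18 • f (2 • y) - 36 • f y + 18 • f x

/-- Quadratic functional equation. -/
def IsQuadratic {X Y : Type*} [AddCommGroup X] [AddCommGroup Y] (g : X → Y) : Prop :=
  ∀ x y : X, g (x + y) + g (x - y) = 2 • g x + 2 • g y

/-- Cubic functional equation. -/
def IsCubic {X Y : Type*} [AddCommGroup X] [AddCommGroup Y] (c : X → Y) : Prop :=
  ∀ x y : X, c (2 • x + y) + c (2 • x - y) = 2 • c (x + y) + 2 • c (x - y) + 12 • c x

/-- Quartic functional equation. -/
def IsQuartic {X Y : Type*} [AddCommGroup X] [AddCommGroup Y] (q : X → Y) : Prop :=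
  ∀ x y : X, q (2 • x + y) + q (2 • x - y) = 4 • (q (x + y) + q (x - y)) + 24 • q x - 6 • q y

section Aux
variable {X Y : Type*} [NormedAddCommGroup X] [NormedSpace ℝ X]
  [NormedAddCommGroup Y] [NormedSpace ℝ Y]

lemma dop_eq (f : X → Y) (x y : X) :
    Dop f x y = (3:ℝ) • (f (x + (2:ℝ) • y) + f (x - (2:ℝ) • y))
      - (12:ℝ) • (f (x + y) + f (x - y))
      - (4:ℝ) • f ((3:ℝ) • y) + (18:ℝ) • f ((2:ℝ) • y) - (36:ℝ) • f y + (18:ℝ) • f x := by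
  simp only [Dop, ← Nat.cast_smul_eq_nsmul ℝ, Nat.cast_ofNat]

/-- Dop of `z ↦ c • v (s • z)`. -/
lemma dop_smul_shift (v : X → Y) (c s : ℝ) (x y : X) :
    Dop (fun z => c • v (s • z)) x y = c • Dop v (s • x) (s • y) := by
  rw [dop_eq, dop_eq]
  have e1 : s • (x + (2:ℝ) • y) = s • x + (2:ℝ) • s • y := by module
  have e2 : s • (x - (2:ℝ) • y) = s • x - (2:ℝ) • s • y := by module
  have e3 : s • (x + y) = s • x + s • y := by module
  have e4 : s • (x - y) = s • x - s • y := by module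
  have e5 : s • ((3:ℝ) • y) = (3:ℝ) • s • y := by module
  have e6 : s • ((2:ℝ) • y) = (2:ℝ) • s • y := by module
  simp only [e1, e2, e3, e4, e5, e6]
  module

/-- Dop of `z ↦ u (2 • z) - c • u z`. -/
lemma dop_shift_sub (u : X → Y) (c : ℝ) (x y : X) :
    Dop (fun z => u ((2:ℝ) • z) - c • u z) x y
      = Dop u ((2:ℝ) • x) ((2:ℝ) • y) - c • Dop u x y := by
  rw [dop_eq, dop_eq, dop_eq]
  have e1 : (2:ℝ) • (x + (2:ℝ) • y) = (2:ℝ) • x + (2:ℝ) • (2:ℝ) • y := by module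
  have e2 : (2:ℝ) • (x - (2:ℝ) • y) = (2:ℝ) • x - (2:ℝ) • (2:ℝ) • y := by module
  have e3 : (2:ℝ) • (x + y) = (2:ℝ) • x + (2:ℝ) • y := by module
  have e4 : (2:ℝ) • (x - y) = (2:ℝ) • x - (2:ℝ) • y := by module
  have e5 : (2:ℝ) • ((3:ℝ) • y) = (3:ℝ) • (2:ℝ) • y := by module
  have e6 : (2:ℝ) • ((2:ℝ) • y) = (2:ℝ) • (2:ℝ) • y := rfl
  simp only [e1, e2, e3, e4, e5, e6]
  module

lemma dop_even_part (f : X → Y) (x y : X) :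
    Dop (fun z => (2⁻¹:ℝ) • (f z + f (-z))) x y
      = (2⁻¹:ℝ) • (Dop f x y + Dop f (-x) (-y)) := by
  rw [dop_eq, dop_eq, dop_eq]
  have e5 : (3:ℝ) • -y = -((3:ℝ) • y) := by module
  have e6 : (2:ℝ) • -y = -((2:ℝ) • y) := by module
  have e1 : -x + -((2:ℝ) • y) = -(x + (2:ℝ) • y) := by module
  have e2 : -x - -((2:ℝ) • y) = -(x - (2:ℝ) • y) := by module
  have e3 : -x + -y = -(x + y) := by module
  have e4 : -x - -y = -(x - y) := by module
  simp only [e5, e6, e1, e2, e3, e4]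
  module

lemma dop_odd_part (f : X → Y) (x y : X) :
    Dop (fun z => (2⁻¹:ℝ) • (f z - f (-z))) x y
      = (2⁻¹:ℝ) • (Dop f x y - Dop f (-x) (-y)) := by
  rw [dop_eq, dop_eq, dop_eq]
  have e5 : (3:ℝ) • -y = -((3:ℝ) • y) := by module
  have e6 : (2:ℝ) • -y = -((2:ℝ) • y) := by module
  have e1 : -x + -((2:ℝ) • y) = -(x + (2:ℝ) • y) := by module
  have e2 : -x - -((2:ℝ) • y) = -(x - (2:ℝ) • y) := by module
  have e3 : -x + -y = -(x + y) := by module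
  have e4 : -x - -y = -(x - y) := by module
  simp only [e5, e6, e1, e2, e3, e4]
  module

/-- Identity for odd functions: `4•D(y,y) - D(0,y) = 6•(f(2y) - 8 f y)`. -/
lemma dop_odd_identity (f : X → Y) (hf0 : f 0 = 0) (hodd : ∀ z, f (-z) = - f z) (y : X) :
    (4:ℝ) • Dop f y y - Dop f 0 y = (6:ℝ) • (f ((2:ℝ) • y) - (8:ℝ) • f y) := by
  rw [dop_eq, dop_eq]
  have e1 : y + (2:ℝ) • y = (3:ℝ) • y := by module
  have e2 : y - (2:ℝ) • y = -y := by module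
  have e3 : y + y = (2:ℝ) • y := by module
  have e4 : y - y = (0:X) := by module
  have e5 : (0:X) + (2:ℝ) • y = (2:ℝ) • y := by module
  have e6 : (0:X) - (2:ℝ) • y = -((2:ℝ) • y) := by module
  have e7 : (0:X) + y = y := by module
  have e8 : (0:X) - y = -y := by module
  simp only [e1, e2, e3, e4, e5, e6, e7, e8, hodd, hf0]
  module

/-- Identity for even functions: `D(2y,y) - 16•D(y,y) = 3•(f(4y) - 20 f(2y) + 64 f y)`. -/
lemma dop_even_identity (f : X → Y) (hf0 : f 0 = 0) (heven : ∀ z, f (-z) = f z) (y : X) :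
    Dop f ((2:ℝ) • y) y - (16:ℝ) • Dop f y y
      = (3:ℝ) • (f ((4:ℝ) • y) - (20:ℝ) • f ((2:ℝ) • y) + (64:ℝ) • f y) := by
  rw [dop_eq, dop_eq]
  have e1 : (2:ℝ) • y + (2:ℝ) • y = (4:ℝ) • y := by module
  have e2 : (2:ℝ) • y - (2:ℝ) • y = (0:X) := by module
  have e3 : (2:ℝ) • y + y = (3:ℝ) • y := by module
  have e4 : (2:ℝ) • y - y = y := by module
  have e5 : y + (2:ℝ) • y = (3:ℝ) • y := by module
  have e6 : y - (2:ℝ) • y = -y := by module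
  have e7 : y + y = (2:ℝ) • y := by module
  have e8 : y - y = (0:X) := by module
  simp only [e1, e2, e3, e4, e5, e6, e7, e8, heven, hf0]
  module

/-- If `s^n • a → 0` with `s ≥ 1`, then `a = 0`. -/
lemma geom_smul_eq_zero {a : Y} {s : ℝ} (hs : 1 ≤ s)
    (h : Tendsto (fun n : ℕ => (s:ℝ) ^ n • a) atTop (𝓝 0)) : a = 0 := by
  have h2 : Tendsto (fun n : ℕ => ‖(s:ℝ) ^ n • a‖) atTop (𝓝 0) := by
    simpa using h.norm
  have hb : ∀ n : ℕ, ‖a‖ ≤ ‖(s:ℝ) ^ n • a‖ := by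
    intro n
    rw [norm_smul, Real.norm_eq_abs, abs_of_nonneg (by positivity)]
    nlinarith [one_le_pow₀ hs (n := n), norm_nonneg a]
  have : ‖a‖ = 0 := le_antisymm (by linarith [ge_of_tendsto' h2 hb]) (norm_nonneg a)
  simpa using this

/-- If `4^n • a + 2^n • b + c → 0`, then `a = b = c = 0`. -/
lemma abc_eq_zero {a b c : Y}
    (h : Tendsto (fun n : ℕ => (4:ℝ) ^ n • a + (2:ℝ) ^ n • b + c) atTop (𝓝 0)) :
    a = 0 ∧ b = 0 ∧ c = 0 := by
  set T : ℕ → Y := fun n => (4:ℝ) ^ n • a + (2:ℝ) ^ n • b + c with hT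
  have h1 : Tendsto (fun n => T (n+1)) atTop (𝓝 0) := h.comp (tendsto_add_atTop_nat 1)
  have h2 : Tendsto (fun n => T (n+2)) atTop (𝓝 0) := h.comp (tendsto_add_atTop_nat 2)
  have ha : a = 0 := by
    have hU : Tendsto (fun n => T (n+2) - (3:ℝ) • T (n+1) + (2:ℝ) • T n) atTop (𝓝 0) := by
      have := (h2.sub (h1.const_smul (3:ℝ))).add (h.const_smul (2:ℝ))
      simpa using this
    have hEq : (fun n => T (n+2) - (3:ℝ) • T (n+1) + (2:ℝ) • T n)
        = fun n : ℕ => (4:ℝ) ^ n • ((6:ℝ) • a) := by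
      funext n
      simp only [hT, pow_succ]
      module
    rw [hEq] at hU
    have h6 : (6:ℝ) • a = 0 := geom_smul_eq_zero (by norm_num) hU
    have : a = (6⁻¹:ℝ) • ((6:ℝ) • a) := by module
    rw [this, h6, smul_zero]
  subst ha
  have hb : b = 0 := by
    have hV : Tendsto (fun n => T (n+1) - T n) atTop (𝓝 0) := by simpa using h1.sub h
    have hEq : (fun n => T (n+1) - T n) = fun n : ℕ => (2:ℝ) ^ n • b := by
      funext n
      simp only [hT, pow_succ]
      module
    rw [hEq] at hV
    exact geom_smul_eq_zero (by norm_num) hV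
  subst hb
  have hc : c = 0 := by
    have : T = fun _ => c := by funext n; simp [hT]
    rw [this] at h
    exact tendsto_nhds_unique tendsto_const_nhds h
  exact ⟨rfl, rfl, hc⟩

lemma norm_smul_pow_rpow (x : X) (n : ℕ) {p : ℝ} :
    ‖((2:ℝ)⁻¹) ^ n • x‖ ^ p = (((2:ℝ) ^ p)⁻¹) ^ n * ‖x‖ ^ p := by
  rw [norm_smul, Real.norm_eq_abs, abs_of_nonneg (by positivity),
    Real.mul_rpow (by positivity) (norm_nonneg x)]
  congr 1
  rw [← Real.rpow_natCast ((2:ℝ)⁻¹) n, ← Real.rpow_natCast (((2:ℝ)^p)⁻¹) n,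
    ← Real.rpow_mul (by norm_num), ← Real.inv_rpow (by norm_num),
    ← Real.rpow_mul (by positivity), mul_comm]

lemma norm_smul_rpow (c : ℝ) (hc : 0 ≤ c) (x : X) {p : ℝ} :
    ‖c • x‖ ^ p = c ^ p * ‖x‖ ^ p := by
  rw [norm_smul, Real.norm_eq_abs, abs_of_nonneg hc,
    Real.mul_rpow hc (norm_nonneg x)]

section DL
variable [CompleteSpace Y]

lemma direct_limit {p : ℝ} (hp : 0 < p) {k B Θ : ℝ} (hk : 1 ≤ k)
    (hkp : k < (2:ℝ) ^ p) (hB : 0 ≤ B) (hΘ : 0 ≤ Θ) {v : X → Y}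
    (hv : ∀ x : X, ‖v x - k • v ((2⁻¹:ℝ) • x)‖ ≤ B * ‖x‖ ^ p)
    (hD : ∀ x y : X, ‖Dop v x y‖ ≤ Θ * (‖x‖ ^ p + ‖y‖ ^ p)) :
    ∃ L : X → Y,
      (∀ x, Tendsto (fun n : ℕ => k ^ n • v (((2:ℝ)⁻¹) ^ n • x)) atTop (𝓝 (L x))) ∧
      (∀ x, ‖v x - L x‖ ≤ B / (1 - k / 2 ^ p) * ‖x‖ ^ p) ∧
      (∀ x y, Dop L x y = 0) ∧
      (∀ x, L ((2:ℝ) • x) = k • L x) := by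
  have h2p : (0:ℝ) < (2:ℝ) ^ p := by positivity
  set r : ℝ := k / (2:ℝ) ^ p with hr
  have hr0 : 0 ≤ r := by positivity
  have hr1 : r < 1 := (div_lt_one h2p).2 hkp
  set a : X → ℕ → Y := fun x n => k ^ n • v (((2:ℝ)⁻¹) ^ n • x) with ha
  have hdist : ∀ (x : X) (n : ℕ),
      dist (a x n) (a x (n+1)) ≤ (B * ‖x‖ ^ p) * r ^ n := by
    intro x n
    rw [dist_eq_norm]
    have harg : ((2:ℝ)⁻¹) ^ (n+1) • x = (2⁻¹:ℝ) • (((2:ℝ)⁻¹) ^ n • x) := by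
      rw [pow_succ, mul_comm, mul_smul]
    have : a x n - a x (n+1)
        = k ^ n • (v (((2:ℝ)⁻¹) ^ n • x) - k • v ((2⁻¹:ℝ) • (((2:ℝ)⁻¹) ^ n • x))) := by
      simp only [ha]
      rw [harg, pow_succ]
      module
    rw [this, norm_smul, Real.norm_eq_abs, abs_of_nonneg (by positivity)]
    calc k ^ n * ‖v (((2:ℝ)⁻¹) ^ n • x) - k • v ((2⁻¹:ℝ) • (((2:ℝ)⁻¹) ^ n • x))‖
        ≤ k ^ n * (B * ‖((2:ℝ)⁻¹) ^ n • x‖ ^ p) := by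
          exact mul_le_mul_of_nonneg_left (hv _) (by positivity)
      _ = (B * ‖x‖ ^ p) * r ^ n := by
          rw [norm_smul_pow_rpow x n, hr, div_pow, inv_pow, div_eq_mul_inv]
          ring
  have hcauchy : ∀ x : X, ∃ l : Y, Tendsto (a x) atTop (𝓝 l) := fun x =>
    cauchySeq_tendsto_of_complete (cauchySeq_of_le_geometric r (B * ‖x‖ ^ p) hr1 (hdist x))
  choose L hL using hcauchy
  refine ⟨L, hL, ?_, ?_, ?_⟩
  · intro x
    have h0 : a x 0 = v x := by simp [ha]
    have := dist_le_of_le_geometric_of_tendsto₀ r (B * ‖x‖ ^ p) hr1 (hdist x) (hL x)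
    rw [h0, dist_eq_norm] at this
    calc ‖v x - L x‖ ≤ B * ‖x‖ ^ p / (1 - r) := this
      _ = B / (1 - k / 2 ^ p) * ‖x‖ ^ p := by rw [hr]; ring
  · intro x y
    have hDn : ∀ n : ℕ, Dop (fun z => a z n) x y
        = k ^ n • Dop v (((2:ℝ)⁻¹) ^ n • x) (((2:ℝ)⁻¹) ^ n • y) := fun n =>
      dop_smul_shift v (k ^ n) (((2:ℝ)⁻¹) ^ n) x y
    have ht : Tendsto (fun n => Dop (fun z => a z n) x y) atTop (𝓝 (Dop L x y)) := by
      simp only [dop_eq]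
      exact Tendsto.add (Tendsto.sub (Tendsto.add (Tendsto.sub (Tendsto.sub
        (Tendsto.const_smul ((hL (x + (2:ℝ) • y)).add (hL (x - (2:ℝ) • y))) (3:ℝ))
        (Tendsto.const_smul ((hL (x + y)).add (hL (x - y))) (12:ℝ)))
        (Tendsto.const_smul (hL ((3:ℝ) • y)) (4:ℝ)))
        (Tendsto.const_smul (hL ((2:ℝ) • y)) (18:ℝ)))
        (Tendsto.const_smul (hL y) (36:ℝ)))
        (Tendsto.const_smul (hL x) (18:ℝ))
    have ht0 : Tendsto (fun n => Dop (fun z => a z n) x y) atTop (𝓝 0) := by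
      have hbnd : ∀ n : ℕ, ‖Dop (fun z => a z n) x y‖
          ≤ (Θ * (‖x‖ ^ p + ‖y‖ ^ p)) * r ^ n := by
        intro n
        rw [hDn n, norm_smul, Real.norm_eq_abs, abs_of_nonneg (by positivity)]
        calc k ^ n * ‖Dop v (((2:ℝ)⁻¹) ^ n • x) (((2:ℝ)⁻¹) ^ n • y)‖
            ≤ k ^ n * (Θ * (‖((2:ℝ)⁻¹) ^ n • x‖ ^ p + ‖((2:ℝ)⁻¹) ^ n • y‖ ^ p)) :=
              mul_le_mul_of_nonneg_left (hD _ _) (by positivity)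
          _ = (Θ * (‖x‖ ^ p + ‖y‖ ^ p)) * r ^ n := by
              rw [norm_smul_pow_rpow x n, norm_smul_pow_rpow y n, hr, div_pow,
                inv_pow, div_eq_mul_inv]
              ring
      have hg : Tendsto (fun n : ℕ => (Θ * (‖x‖ ^ p + ‖y‖ ^ p)) * r ^ n) atTop (𝓝 0) := by
        simpa using tendsto_const_nhds.mul (tendsto_pow_atTop_nhds_zero_of_lt_one hr0 hr1)
      exact squeeze_zero_norm hbnd hg
    exact tendsto_nhds_unique ht ht0
  · intro x
    have h1 : Tendsto (fun n => a ((2:ℝ) • x) (n + 1)) atTop (𝓝 (L ((2:ℝ) • x))) :=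
      (hL ((2:ℝ) • x)).comp (tendsto_add_atTop_nat 1)
    have h2 : (fun n => a ((2:ℝ) • x) (n + 1)) = fun n => k • a x n := by
      funext n
      have hs : ((2:ℝ)⁻¹) ^ (n+1) * 2 = ((2:ℝ)⁻¹) ^ n := by
        rw [pow_succ]; field_simp
      have harg : ((2:ℝ)⁻¹) ^ (n+1) • ((2:ℝ) • x) = ((2:ℝ)⁻¹) ^ n • x := by
        rw [smul_smul, hs]
      simp only [ha]
      rw [harg, pow_succ]
      module
    rw [h2] at h1
    exact tendsto_nhds_unique h1 ((hL x).const_smul k)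
end DL

/-- If `L` is odd, `Dop L = 0` and `L(2x) = 8 L(x)`, then `L` is cubic. -/
lemma isCubic_of (L : X → Y) (hodd : ∀ z, L (-z) = - L z)
    (hD : ∀ x y, Dop L x y = 0) (hs : ∀ x, L ((2:ℝ) • x) = (8:ℝ) • L x) : IsCubic L := by
  have hL0 : L 0 = 0 := by
    have := hodd 0
    rw [neg_zero] at this
    linear_combination (norm := module) (2⁻¹:ℝ) • this
  have h3 : ∀ y : X, L ((3:ℝ) • y) = (27:ℝ) • L y := by
    intro y
    have h := hD 0 y
    rw [dop_eq] at h
    have e1 : (0:X) + (2:ℝ) • y = (2:ℝ) • y := by module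
    have e2 : (0:X) - (2:ℝ) • y = -((2:ℝ) • y) := by module
    have e3 : (0:X) + y = y := by module
    have e4 : (0:X) - y = -y := by module
    rw [e1, e2, e3, e4, hodd, hodd, hL0, hs] at h
    linear_combination (norm := module) (-4⁻¹:ℝ) • h
  have hE : ∀ x y : X, L (x + (2:ℝ) • y) + L (x - (2:ℝ) • y)
      = (4:ℝ) • (L (x + y) + L (x - y)) - (6:ℝ) • L x := by
    intro x y
    have h := hD x y
    rw [dop_eq, h3, hs] at h
    linear_combination (norm := module) (3⁻¹:ℝ) • h
  intro x y
  have h := hE ((2:ℝ) • x) y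
  have e1 : (2:ℝ) • x + (2:ℝ) • y = (2:ℝ) • (x + y) := by module
  have e2 : (2:ℝ) • x - (2:ℝ) • y = (2:ℝ) • (x - y) := by module
  rw [e1, e2, hs, hs, hs] at h
  have e3 : (2:ℕ) • x + y = (2:ℝ) • x + y := by
    rw [← Nat.cast_smul_eq_nsmul ℝ]; norm_num
  have e4 : (2:ℕ) • x - y = (2:ℝ) • x - y := by
    rw [← Nat.cast_smul_eq_nsmul ℝ]; norm_num
  rw [e3, e4]
  simp only [← Nat.cast_smul_eq_nsmul ℝ, Nat.cast_ofNat]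
  linear_combination (norm := module) (-4⁻¹:ℝ) • h

/-- If `L` is even, `Dop L = 0` and `L(2x) = 4 L(x)`, then `L` is quadratic. -/
lemma isQuadratic_of (L : X → Y) (hL0 : L 0 = 0) (heven : ∀ z, L (-z) = L z)
    (hD : ∀ x y, Dop L x y = 0) (hs : ∀ x, L ((2:ℝ) • x) = (4:ℝ) • L x) : IsQuadratic L := by
  have h3 : ∀ y : X, L ((3:ℝ) • y) = (9:ℝ) • L y := by
    intro y
    have h := hD y y
    rw [dop_eq] at h
    have e1 : y + (2:ℝ) • y = (3:ℝ) • y := by module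
    have e2 : y - (2:ℝ) • y = -y := by module
    have e3 : y + y = (2:ℝ) • y := by module
    have e4 : y - y = (0:X) := by module
    rw [e1, e2, e3, e4, heven, hL0, hs] at h
    linear_combination (norm := module) (-1:ℝ) • h
  have hE : ∀ x y : X, L (x + (2:ℝ) • y) + L (x - (2:ℝ) • y)
      = (4:ℝ) • (L (x + y) + L (x - y)) - (6:ℝ) • L x := by
    intro x y
    have h := hD x y
    rw [dop_eq, h3, hs] at h
    linear_combination (norm := module) (3⁻¹:ℝ) • h
  have hR : ∀ x y : X, L ((2:ℝ) • x + y) + L ((2:ℝ) • x - y)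
      = (4:ℝ) • (L (x + y) + L (x - y)) - (6:ℝ) • L y := by
    intro x y
    have h := hE y x
    have e1 : y + (2:ℝ) • x = (2:ℝ) • x + y := by module
    have e2 : y - (2:ℝ) • x = -((2:ℝ) • x - y) := by module
    have e3 : y + x = x + y := by module
    have e4 : y - x = -(x - y) := by module
    rw [e1, e2, e3, e4, heven, heven] at h
    linear_combination (norm := module) h
  intro x y
  have h := hR x ((2:ℝ) • y)
  have e2 : (2:ℝ) • x + (2:ℝ) • y = (2:ℝ) • (x + y) := by module
  have e3 : (2:ℝ) • x - (2:ℝ) • y = (2:ℝ) • (x - y) := by module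
  rw [e2, e3, hs, hs, hs] at h
  have h2 := hE x y
  simp only [← Nat.cast_smul_eq_nsmul ℝ, Nat.cast_ofNat]
  linear_combination (norm := module) (-12⁻¹:ℝ) • h - (3⁻¹:ℝ) • h2

/-- If `L` is even, `Dop L = 0` and `L(2x) = 16 L(x)`, then `L` is quartic. -/
lemma isQuartic_of (L : X → Y) (hL0 : L 0 = 0) (heven : ∀ z, L (-z) = L z)
    (hD : ∀ x y, Dop L x y = 0) (hs : ∀ x, L ((2:ℝ) • x) = (16:ℝ) • L x) : IsQuartic L := by
  have h3 : ∀ y : X, L ((3:ℝ) • y) = (81:ℝ) • L y := by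
    intro y
    have h := hD y y
    rw [dop_eq] at h
    have e1 : y + (2:ℝ) • y = (3:ℝ) • y := by module
    have e2 : y - (2:ℝ) • y = -y := by module
    have e3 : y + y = (2:ℝ) • y := by module
    have e4 : y - y = (0:X) := by module
    rw [e1, e2, e3, e4, heven, hL0, hs] at h
    linear_combination (norm := module) (-1:ℝ) • h
  have hE : ∀ x y : X, L (x + (2:ℝ) • y) + L (x - (2:ℝ) • y)
      = (4:ℝ) • (L (x + y) + L (x - y)) + (24:ℝ) • L y - (6:ℝ) • L x := by
    intro x y
    have h := hD x y
    rw [dop_eq, h3, hs] at h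
    linear_combination (norm := module) (3⁻¹:ℝ) • h
  intro x y
  have h := hE y x
  have e1 : y + (2:ℝ) • x = (2:ℝ) • x + y := by module
  have e2 : y - (2:ℝ) • x = -((2:ℝ) • x - y) := by module
  have e3 : y + x = x + y := by module
  have e4 : y - x = -(x - y) := by module
  rw [e1, e2, e3, e4, heven, heven] at h
  have e5 : (2:ℕ) • x + y = (2:ℝ) • x + y := by
    rw [← Nat.cast_smul_eq_nsmul ℝ]; norm_num
  have e6 : (2:ℕ) • x - y = (2:ℝ) • x - y := by
    rw [← Nat.cast_smul_eq_nsmul ℝ]; norm_num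
  rw [e5, e6]
  simp only [← Nat.cast_smul_eq_nsmul ℝ, Nat.cast_ofNat]
  linear_combination (norm := module) h

/-- Doubling scale for quadratic maps. -/
lemma isQuadratic_scale {Q : X → Y} (hQ : IsQuadratic Q) :
    ∀ x, Q ((2:ℝ) • x) = (4:ℝ) • Q x := by
  have h0 : Q 0 = 0 := by
    have h := hQ 0 0
    simp only [add_zero, sub_zero, ← Nat.cast_smul_eq_nsmul ℝ, Nat.cast_ofNat] at h
    linear_combination (norm := module) (-2⁻¹:ℝ) • h
  intro x
  have h := hQ x x
  have e1 : x + x = (2:ℝ) • x := by module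
  have e2 : x - x = (0:X) := by module
  rw [e1, e2, h0] at h
  simp only [← Nat.cast_smul_eq_nsmul ℝ, Nat.cast_ofNat] at h
  linear_combination (norm := module) h

/-- Doubling scale for cubic maps. -/
lemma isCubic_scale {C : X → Y} (hC : IsCubic C) :
    ∀ x, C ((2:ℝ) • x) = (8:ℝ) • C x := by
  intro x
  have h := hC x 0
  have e0 : (2:ℕ) • x = (2:ℝ) • x := by
    rw [← Nat.cast_smul_eq_nsmul ℝ]; norm_num
  rw [add_zero, sub_zero, add_zero, sub_zero, e0] at h
  simp only [← Nat.cast_smul_eq_nsmul ℝ, Nat.cast_ofNat] at h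
  linear_combination (norm := module) (2⁻¹:ℝ) • h

/-- Doubling scale for quartic maps. -/
lemma isQuartic_scale {Q : X → Y} (hQ : IsQuartic Q) :
    ∀ x, Q ((2:ℝ) • x) = (16:ℝ) • Q x := by
  have h0 : Q 0 = 0 := by
    have h := hQ 0 0
    have e0 : (2:ℕ) • (0:X) = (0:X) := by simp
    simp only [e0, add_zero, sub_zero] at h
    simp only [← Nat.cast_smul_eq_nsmul ℝ, Nat.cast_ofNat] at h
    linear_combination (norm := module) (-24⁻¹:ℝ) • h
  intro x
  have h := hQ x 0
  have e0 : (2:ℕ) • x = (2:ℝ) • x := by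
    rw [← Nat.cast_smul_eq_nsmul ℝ]; norm_num
  rw [add_zero, sub_zero, add_zero, sub_zero, e0, h0] at h
  simp only [← Nat.cast_smul_eq_nsmul ℝ, Nat.cast_ofNat] at h
  linear_combination (norm := module) (2⁻¹:ℝ) • h

/-- Iterated halving. -/
lemma scale_iter {Q : X → Y} {m : ℝ} (hs : ∀ x, Q ((2:ℝ) • x) = m • Q x) :
    ∀ (n : ℕ) (x : X), Q x = m ^ n • Q (((2:ℝ)⁻¹) ^ n • x) := by
  intro n
  induction n with
  | zero => intro x; simp
  | succ n ih =>
    intro x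
    have hsc : (2:ℝ) * ((2:ℝ)⁻¹) ^ (n+1) = ((2:ℝ)⁻¹) ^ n := by
      rw [pow_succ]; field_simp
    have harg : (2:ℝ) • (((2:ℝ)⁻¹) ^ (n+1) • x) = ((2:ℝ)⁻¹) ^ n • x := by
      rw [smul_smul, hsc]
    calc Q x = m ^ n • Q (((2:ℝ)⁻¹) ^ n • x) := ih x
      _ = m ^ n • Q ((2:ℝ) • (((2:ℝ)⁻¹) ^ (n+1) • x)) := by rw [harg]
      _ = m ^ (n+1) • Q (((2:ℝ)⁻¹) ^ (n+1) • x) := by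
          rw [hs, smul_smul, pow_succ m n]

lemma isQuadratic_smul {Q : X → Y} (hQ : IsQuadratic Q) (c : ℝ) :
    IsQuadratic (fun x => c • Q x) := by
  intro x y
  have h := hQ x y
  simp only [← Nat.cast_smul_eq_nsmul ℝ, Nat.cast_ofNat] at h ⊢
  linear_combination (norm := module) c • h

lemma isCubic_smul {C : X → Y} (hC : IsCubic C) (c : ℝ) :
    IsCubic (fun x => c • C x) := by
  intro x y
  have h := hC x y
  simp only [← Nat.cast_smul_eq_nsmul ℝ, Nat.cast_ofNat] at h ⊢
  linear_combination (norm := module) c • h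

lemma isQuartic_smul {Q : X → Y} (hQ : IsQuartic Q) (c : ℝ) :
    IsQuartic (fun x => c • Q x) := by
  intro x y
  have h := hQ x y
  simp only [← Nat.cast_smul_eq_nsmul ℝ, Nat.cast_ofNat] at h ⊢
  linear_combination (norm := module) c • h

lemma const_identity {P θ : ℝ} (hP0 : P ≠ 0) (h4 : P - 4 ≠ 0) (h8 : P - 8 ≠ 0)
    (h16 : P - 16 ≠ 0) (hd4 : 1 - 4 / P ≠ 0) (hd8 : 1 - 8 / P ≠ 0) (hd16 : 1 - 16 / P ≠ 0) :
    12⁻¹ * ((P + 33)/3 * θ * P⁻¹ / (1 - 4 / P))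
        + 12⁻¹ * ((P + 33)/3 * θ * P⁻¹ / (1 - 16 / P))
        + 3/2 * θ * P⁻¹ / (1 - 8 / P)
      = ((33 + P) / 36 * (1 / (P - 4) + 1 / (P - 16)) + 3 / (2 * (P - 8))) * θ := by
  have e4 : 1 - 4 / P = (P - 4) / P := by field_simp
  have e8 : 1 - 8 / P = (P - 8) / P := by field_simp
  have e16 : 1 - 16 / P = (P - 16) / P := by field_simp
  rw [e4, e8, e16]
  field_simp
  ring

end Aux
set_option maxHeartbeats 1000000 in
theorem stmt_12 {X Y : Type*} [NormedAddCommGroup X] [NormedSpace ℝ X]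
    [NormedAddCommGroup Y] [NormedSpace ℝ Y] [CompleteSpace Y]
    (p θ : ℝ) (hp : 4 < p) (hθ : 0 ≤ θ)
    (f : X → Y) (hf0 : f 0 = 0)
    (hbd : ∀ x y : X, ‖Dop f x y‖ ≤ θ * (‖x‖ ^ p + ‖y‖ ^ p)) :
    ∃ (Q₁ C Q₂ : X → Y),
      IsQuadratic Q₁ ∧ IsCubic C ∧ IsQuartic Q₂ ∧
      (∀ x : X, ‖f x - Q₁ x - C x - Q₂ x‖ ≤
        ((33 + (2 : ℝ) ^ p) / 36 * (1 / ((2 : ℝ) ^ p - 4) + 1 / ((2 : ℝ) ^ p - 16)) +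
          3 / (2 * ((2 : ℝ) ^ p - 8))) * θ * ‖x‖ ^ p) ∧
      (∀ Q₁' C' Q₂' : X → Y, IsQuadratic Q₁' → IsCubic C' → IsQuartic Q₂' →
        (∀ x : X, ‖f x - Q₁' x - C' x - Q₂' x‖ ≤
          ((33 + (2 : ℝ) ^ p) / 36 * (1 / ((2 : ℝ) ^ p - 4) + 1 / ((2 : ℝ) ^ p - 16)) +
            3 / (2 * ((2 : ℝ) ^ p - 8))) * θ * ‖x‖ ^ p) →
        Q₁' = Q₁ ∧ C' = C ∧ Q₂' = Q₂) := by
  have hp0 : (0:ℝ) < p := by linarith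
  have h2p4 : (2:ℝ) ^ (4:ℝ) = 16 := by
    rw [show (4:ℝ) = ((4:ℕ):ℝ) by norm_num, Real.rpow_natCast]; norm_num
  have h16 : (16:ℝ) < (2:ℝ) ^ p := by
    rw [← h2p4]; exact (Real.rpow_lt_rpow_left_iff (by norm_num)).2 hp
  have h2p0 : (0:ℝ) < (2:ℝ) ^ p := by positivity
  have h8 : (8:ℝ) < (2:ℝ) ^ p := by linarith
  have h4 : (4:ℝ) < (2:ℝ) ^ p := by linarith
  -- even and odd parts
  obtain ⟨fe, hfe⟩ : ∃ fe : X → Y, fe = fun z => (2⁻¹:ℝ) • (f z + f (-z)) := ⟨_, rfl⟩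
  obtain ⟨fo, hfo⟩ : ∃ fo : X → Y, fo = fun z => (2⁻¹:ℝ) • (f z - f (-z)) := ⟨_, rfl⟩
  have hfe0 : fe 0 = 0 := by simp [hfe, hf0]
  have hfo0 : fo 0 = 0 := by simp [hfo]
  have hfee : ∀ z, fe (-z) = fe z := by
    intro z; simp only [hfe, neg_neg]; module
  have hfoo : ∀ z, fo (-z) = - fo z := by
    intro z; simp only [hfo, neg_neg]; module
  have hfeo : ∀ z, f z = fe z + fo z := by
    intro z; simp only [hfe, hfo]; module
  have hDfe : ∀ x y : X, ‖Dop fe x y‖ ≤ θ * (‖x‖ ^ p + ‖y‖ ^ p) := by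
    intro x y
    rw [hfe, dop_even_part, norm_smul, Real.norm_eq_abs, abs_of_nonneg (by norm_num : (0:ℝ) ≤ 2⁻¹)]
    have h1 := hbd x y
    have h2 := hbd (-x) (-y)
    rw [norm_neg, norm_neg] at h2
    have h3 := norm_add_le (Dop f x y) (Dop f (-x) (-y))
    linarith
  have hDfo : ∀ x y : X, ‖Dop fo x y‖ ≤ θ * (‖x‖ ^ p + ‖y‖ ^ p) := by
    intro x y
    rw [hfo, dop_odd_part, norm_smul, Real.norm_eq_abs, abs_of_nonneg (by norm_num : (0:ℝ) ≤ 2⁻¹)]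
    have h1 := hbd x y
    have h2 := hbd (-x) (-y)
    rw [norm_neg, norm_neg] at h2
    have h3 := norm_sub_le (Dop f x y) (Dop f (-x) (-y))
    linarith
  -- odd part: basic inequality
  have hineqO : ∀ y : X, ‖fo ((2:ℝ) • y) - (8:ℝ) • fo y‖ ≤ 3/2 * θ * ‖y‖ ^ p := by
    intro y
    have hid := dop_odd_identity fo hfo0 hfoo y
    have he : fo ((2:ℝ) • y) - (8:ℝ) • fo y
        = (6⁻¹:ℝ) • ((4:ℝ) • Dop fo y y - Dop fo 0 y) := by
      linear_combination (norm := module) (-6⁻¹:ℝ) • hid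
    have h1 := hDfo y y
    have h2 := hDfo 0 y
    rw [norm_zero, Real.zero_rpow (by linarith : p ≠ 0)] at h2
    have hn : ‖(4:ℝ) • Dop fo y y - Dop fo 0 y‖
        ≤ 4 * ‖Dop fo y y‖ + ‖Dop fo 0 y‖ := by
      refine le_trans (norm_sub_le _ _) ?_
      rw [norm_smul, Real.norm_eq_abs, abs_of_nonneg (by norm_num : (0:ℝ) ≤ 4)]
    rw [he, norm_smul, Real.norm_eq_abs, abs_of_nonneg (by norm_num : (0:ℝ) ≤ 6⁻¹)]
    linarith
  -- even part: basic inequality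
  have hineqE : ∀ y : X, ‖fe ((4:ℝ) • y) - (20:ℝ) • fe ((2:ℝ) • y) + (64:ℝ) • fe y‖
      ≤ ((2:ℝ) ^ p + 33) / 3 * θ * ‖y‖ ^ p := by
    intro y
    have hid := dop_even_identity fe hfe0 hfee y
    have he : fe ((4:ℝ) • y) - (20:ℝ) • fe ((2:ℝ) • y) + (64:ℝ) • fe y
        = (3⁻¹:ℝ) • (Dop fe ((2:ℝ) • y) y - (16:ℝ) • Dop fe y y) := by
      linear_combination (norm := module) (-3⁻¹:ℝ) • hid
    have h1 := hDfe ((2:ℝ) • y) y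
    rw [norm_smul_rpow 2 (by norm_num) y] at h1
    have h2 := hDfe y y
    have hn : ‖Dop fe ((2:ℝ) • y) y - (16:ℝ) • Dop fe y y‖
        ≤ ‖Dop fe ((2:ℝ) • y) y‖ + 16 * ‖Dop fe y y‖ := by
      refine le_trans (norm_sub_le _ _) ?_
      rw [norm_smul, Real.norm_eq_abs, abs_of_nonneg (by norm_num : (0:ℝ) ≤ 16)]
    rw [he, norm_smul, Real.norm_eq_abs, abs_of_nonneg (by norm_num : (0:ℝ) ≤ 3⁻¹)]
    nlinarith [h1, h2, hn]
  -- quadratic-type and quartic-type even auxiliary functions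
  obtain ⟨g, hg⟩ : ∃ g : X → Y, g = fun z => fe ((2:ℝ) • z) - (16:ℝ) • fe z := ⟨_, rfl⟩
  obtain ⟨q, hq⟩ : ∃ q : X → Y, q = fun z => fe ((2:ℝ) • z) - (4:ℝ) • fe z := ⟨_, rfl⟩
  have e21 : ∀ x : X, (2:ℝ) • ((2⁻¹:ℝ) • x) = x := by
    intro x; rw [smul_smul]; norm_num
  have e41 : ∀ x : X, (4:ℝ) • ((2⁻¹:ℝ) • x) = (2:ℝ) • x := by
    intro x; rw [smul_smul]; norm_num
  -- contraction bounds
  have hvO : ∀ x : X, ‖fo x - (8:ℝ) • fo ((2⁻¹:ℝ) • x)‖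
      ≤ 3/2 * θ * ((2:ℝ) ^ p)⁻¹ * ‖x‖ ^ p := by
    intro x
    have h := hineqO ((2⁻¹:ℝ) • x)
    rw [e21, norm_smul_rpow 2⁻¹ (by norm_num) x, Real.inv_rpow (by norm_num)] at h
    calc ‖fo x - (8:ℝ) • fo ((2⁻¹:ℝ) • x)‖ ≤ 3/2 * θ * (((2:ℝ)^p)⁻¹ * ‖x‖^p) := h
      _ = 3/2 * θ * ((2:ℝ) ^ p)⁻¹ * ‖x‖ ^ p := by ring
  have hvG : ∀ x : X, ‖g x - (4:ℝ) • g ((2⁻¹:ℝ) • x)‖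
      ≤ ((2:ℝ) ^ p + 33) / 3 * θ * ((2:ℝ) ^ p)⁻¹ * ‖x‖ ^ p := by
    intro x
    have h := hineqE ((2⁻¹:ℝ) • x)
    rw [e21, e41, norm_smul_rpow 2⁻¹ (by norm_num) x, Real.inv_rpow (by norm_num)] at h
    have he : g x - (4:ℝ) • g ((2⁻¹:ℝ) • x)
        = fe ((2:ℝ) • x) - (20:ℝ) • fe x + (64:ℝ) • fe ((2⁻¹:ℝ) • x) := by
      simp only [hg, e21]
      module
    rw [he]
    calc _ ≤ ((2:ℝ)^p + 33)/3 * θ * (((2:ℝ)^p)⁻¹ * ‖x‖^p) := h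
      _ = ((2:ℝ) ^ p + 33) / 3 * θ * ((2:ℝ) ^ p)⁻¹ * ‖x‖ ^ p := by ring
  have hvH : ∀ x : X, ‖q x - (16:ℝ) • q ((2⁻¹:ℝ) • x)‖
      ≤ ((2:ℝ) ^ p + 33) / 3 * θ * ((2:ℝ) ^ p)⁻¹ * ‖x‖ ^ p := by
    intro x
    have h := hineqE ((2⁻¹:ℝ) • x)
    rw [e21, e41, norm_smul_rpow 2⁻¹ (by norm_num) x, Real.inv_rpow (by norm_num)] at h
    have he : q x - (16:ℝ) • q ((2⁻¹:ℝ) • x)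
        = fe ((2:ℝ) • x) - (20:ℝ) • fe x + (64:ℝ) • fe ((2⁻¹:ℝ) • x) := by
      simp only [hq, e21]
      module
    rw [he]
    calc _ ≤ ((2:ℝ)^p + 33)/3 * θ * (((2:ℝ)^p)⁻¹ * ‖x‖^p) := h
      _ = ((2:ℝ) ^ p + 33) / 3 * θ * ((2:ℝ) ^ p)⁻¹ * ‖x‖ ^ p := by ring
  -- Dop bounds for g and q
  have hDg : ∀ x y : X, ‖Dop g x y‖ ≤ θ * ((2:ℝ)^p + 16) * (‖x‖ ^ p + ‖y‖ ^ p) := by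
    intro x y
    rw [hg, dop_shift_sub]
    have h1 := hDfe ((2:ℝ) • x) ((2:ℝ) • y)
    rw [norm_smul_rpow 2 (by norm_num) x, norm_smul_rpow 2 (by norm_num) y] at h1
    have h2 := hDfe x y
    calc ‖Dop fe ((2:ℝ) • x) ((2:ℝ) • y) - (16:ℝ) • Dop fe x y‖
        ≤ ‖Dop fe ((2:ℝ) • x) ((2:ℝ) • y)‖ + 16 * ‖Dop fe x y‖ := by
          refine le_trans (norm_sub_le _ _) ?_
          rw [norm_smul, Real.norm_eq_abs, abs_of_nonneg (by norm_num : (0:ℝ) ≤ 16)]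
      _ ≤ θ * ((2:ℝ)^p * ‖x‖^p + (2:ℝ)^p * ‖y‖^p) + 16 * (θ * (‖x‖^p + ‖y‖^p)) := by
          refine add_le_add h1 ?_
          exact mul_le_mul_of_nonneg_left h2 (by norm_num)
      _ = θ * ((2:ℝ)^p + 16) * (‖x‖ ^ p + ‖y‖ ^ p) := by ring
  have hDq : ∀ x y : X, ‖Dop q x y‖ ≤ θ * ((2:ℝ)^p + 4) * (‖x‖ ^ p + ‖y‖ ^ p) := by
    intro x y
    rw [hq, dop_shift_sub]
    have h1 := hDfe ((2:ℝ) • x) ((2:ℝ) • y)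
    rw [norm_smul_rpow 2 (by norm_num) x, norm_smul_rpow 2 (by norm_num) y] at h1
    have h2 := hDfe x y
    calc ‖Dop fe ((2:ℝ) • x) ((2:ℝ) • y) - (4:ℝ) • Dop fe x y‖
        ≤ ‖Dop fe ((2:ℝ) • x) ((2:ℝ) • y)‖ + 4 * ‖Dop fe x y‖ := by
          refine le_trans (norm_sub_le _ _) ?_
          rw [norm_smul, Real.norm_eq_abs, abs_of_nonneg (by norm_num : (0:ℝ) ≤ 4)]
      _ ≤ θ * ((2:ℝ)^p * ‖x‖^p + (2:ℝ)^p * ‖y‖^p) + 4 * (θ * (‖x‖^p + ‖y‖^p)) := by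
          refine add_le_add h1 ?_
          exact mul_le_mul_of_nonneg_left h2 (by norm_num)
      _ = θ * ((2:ℝ)^p + 4) * (‖x‖ ^ p + ‖y‖ ^ p) := by ring
  -- limits
  obtain ⟨G, htG, herrG, hDG, hsG⟩ :=
    direct_limit (p := p) hp0 (k := (4:ℝ)) (by norm_num) h4
      (mul_nonneg (mul_nonneg (by positivity) hθ) (by positivity))
      (mul_nonneg hθ (by positivity)) hvG hDg
  obtain ⟨H, htH, herrH, hDH, hsH⟩ :=
    direct_limit (p := p) hp0 (k := (16:ℝ)) (by norm_num) h16
      (mul_nonneg (mul_nonneg (by positivity) hθ) (by positivity))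
      (mul_nonneg hθ (by positivity)) hvH hDq
  obtain ⟨Cf, htC, herrC, hDC, hsC⟩ :=
    direct_limit (p := p) hp0 (k := (8:ℝ)) (by norm_num) h8
      (mul_nonneg (mul_nonneg (by norm_num) hθ) (by positivity)) hθ hvO hDfo
  -- parity / zero values of the limits
  have hgeven : ∀ z, g (-z) = g z := by
    intro z
    simp only [hg]
    rw [show (2:ℝ) • -z = -((2:ℝ) • z) from by module, hfee, hfee]
  have hqeven : ∀ z, q (-z) = q z := by
    intro z
    simp only [hq]
    rw [show (2:ℝ) • -z = -((2:ℝ) • z) from by module, hfee, hfee]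
  have hfoodd : ∀ z, fo (-z) = - fo z := hfoo
  have hg0 : g 0 = 0 := by simp [hg, hfe0]
  have hq0 : q 0 = 0 := by simp [hq, hfe0]
  have hGeven : ∀ z, G (-z) = G z := by
    intro z
    have h1 := htG (-z)
    have h2 : (fun n : ℕ => (4:ℝ)^n • g (((2:ℝ)⁻¹)^n • -z))
        = fun n : ℕ => (4:ℝ)^n • g (((2:ℝ)⁻¹)^n • z) := by
      funext n; rw [smul_neg, hgeven]
    rw [h2] at h1
    exact tendsto_nhds_unique h1 (htG z)
  have hHeven : ∀ z, H (-z) = H z := by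
    intro z
    have h1 := htH (-z)
    have h2 : (fun n : ℕ => (16:ℝ)^n • q (((2:ℝ)⁻¹)^n • -z))
        = fun n : ℕ => (16:ℝ)^n • q (((2:ℝ)⁻¹)^n • z) := by
      funext n; rw [smul_neg, hqeven]
    rw [h2] at h1
    exact tendsto_nhds_unique h1 (htH z)
  have hCodd : ∀ z, Cf (-z) = - Cf z := by
    intro z
    have h1 := htC (-z)
    have h2 : (fun n : ℕ => (8:ℝ)^n • fo (((2:ℝ)⁻¹)^n • -z))
        = fun n : ℕ => - ((8:ℝ)^n • fo (((2:ℝ)⁻¹)^n • z)) := by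
      funext n; rw [smul_neg, hfoodd, smul_neg]
    rw [h2] at h1
    exact tendsto_nhds_unique h1 ((htC z).neg)
  have hG0 : G 0 = 0 := by
    have h1 := htG 0
    have h2 : (fun n : ℕ => (4:ℝ)^n • g (((2:ℝ)⁻¹)^n • (0:X))) = fun _ => (0:Y) := by
      funext n; rw [smul_zero, hg0, smul_zero]
    rw [h2] at h1
    exact tendsto_nhds_unique h1 tendsto_const_nhds
  have hH0 : H 0 = 0 := by
    have h1 := htH 0
    have h2 : (fun n : ℕ => (16:ℝ)^n • q (((2:ℝ)⁻¹)^n • (0:X))) = fun _ => (0:Y) := by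
      funext n; rw [smul_zero, hq0, smul_zero]
    rw [h2] at h1
    exact tendsto_nhds_unique h1 tendsto_const_nhds
  -- the three solution functions
  obtain ⟨Q₁, hQ₁⟩ : ∃ Q : X → Y, Q = fun x => (-12⁻¹:ℝ) • G x := ⟨_, rfl⟩
  obtain ⟨Q₂, hQ₂⟩ : ∃ Q : X → Y, Q = fun x => (12⁻¹:ℝ) • H x := ⟨_, rfl⟩
  have hQ₁quad : IsQuadratic Q₁ := by
    rw [hQ₁]; exact isQuadratic_smul (isQuadratic_of G hG0 hGeven hDG hsG) _
  have hQ₂quart : IsQuartic Q₂ := by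
    rw [hQ₂]; exact isQuartic_smul (isQuartic_of H hH0 hHeven hDH hsH) _
  have hCcubic : IsCubic Cf := isCubic_of Cf hCodd hDC hsC
  -- nonzero denominators
  have hne0 : ((2:ℝ)^p) ≠ 0 := ne_of_gt h2p0
  have hd4 : (0:ℝ) < 1 - 4 / (2:ℝ)^p := by
    rw [sub_pos, div_lt_one h2p0]; exact h4
  have hd8 : (0:ℝ) < 1 - 8 / (2:ℝ)^p := by
    rw [sub_pos, div_lt_one h2p0]; exact h8
  have hd16 : (0:ℝ) < 1 - 16 / (2:ℝ)^p := by
    rw [sub_pos, div_lt_one h2p0]; exact h16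
  have hne4 : (2:ℝ)^p - 4 ≠ 0 := ne_of_gt (by linarith)
  have hne8 : (2:ℝ)^p - 8 ≠ 0 := ne_of_gt (by linarith)
  have hne16 : (2:ℝ)^p - 16 ≠ 0 := ne_of_gt (by linarith)
  -- the approximation bound
  have hbound : ∀ x : X, ‖f x - Q₁ x - Cf x - Q₂ x‖ ≤
      ((33 + (2 : ℝ) ^ p) / 36 * (1 / ((2 : ℝ) ^ p - 4) + 1 / ((2 : ℝ) ^ p - 16)) +
        3 / (2 * ((2 : ℝ) ^ p - 8))) * θ * ‖x‖ ^ p := by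
    intro x
    have hsplit : f x - Q₁ x - Cf x - Q₂ x
        = (12⁻¹:ℝ) • ((G x - g x) - (H x - q x)) + (fo x - Cf x) := by
      have hfx := hfeo x
      have h12 : q x - g x = (12:ℝ) • fe x := by simp only [hg, hq]; module
      simp only [hQ₁, hQ₂]
      linear_combination (norm := module) hfx - (12⁻¹:ℝ) • h12
    have hstep1 : ‖f x - Q₁ x - Cf x - Q₂ x‖
        ≤ 12⁻¹ * ‖G x - g x‖ + 12⁻¹ * ‖H x - q x‖ + ‖fo x - Cf x‖ := by
      rw [hsplit]
      refine le_trans (norm_add_le _ _) ?_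
      have h1 : ‖(12⁻¹:ℝ) • ((G x - g x) - (H x - q x))‖
          ≤ 12⁻¹ * (‖G x - g x‖ + ‖H x - q x‖) := by
        rw [norm_smul, Real.norm_eq_abs, abs_of_nonneg (by norm_num : (0:ℝ) ≤ 12⁻¹)]
        have := norm_sub_le (G x - g x) (H x - q x)
        linarith
      linarith
    have hG' : ‖G x - g x‖ ≤ ((2:ℝ)^p + 33)/3 * θ * ((2:ℝ)^p)⁻¹ / (1 - 4 / 2^p) * ‖x‖^p := by
      rw [norm_sub_rev]; exact herrG x
    have hH' : ‖H x - q x‖ ≤ ((2:ℝ)^p + 33)/3 * θ * ((2:ℝ)^p)⁻¹ / (1 - 16 / 2^p) * ‖x‖^p := by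
      rw [norm_sub_rev]; exact herrH x
    have hC' : ‖fo x - Cf x‖ ≤ 3/2 * θ * ((2:ℝ)^p)⁻¹ / (1 - 8 / 2^p) * ‖x‖^p := herrC x
    have hKeq : 12⁻¹ * (((2:ℝ)^p + 33)/3 * θ * ((2:ℝ)^p)⁻¹ / (1 - 4 / 2^p))
        + 12⁻¹ * (((2:ℝ)^p + 33)/3 * θ * ((2:ℝ)^p)⁻¹ / (1 - 16 / 2^p))
        + 3/2 * θ * ((2:ℝ)^p)⁻¹ / (1 - 8 / 2^p)
        = ((33 + (2 : ℝ) ^ p) / 36 * (1 / ((2 : ℝ) ^ p - 4) + 1 / ((2 : ℝ) ^ p - 16)) +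
            3 / (2 * ((2 : ℝ) ^ p - 8))) * θ :=
      const_identity hne0 hne4 hne8 hne16 (ne_of_gt hd4) (ne_of_gt hd8) (ne_of_gt hd16)
    calc ‖f x - Q₁ x - Cf x - Q₂ x‖
        ≤ 12⁻¹ * ‖G x - g x‖ + 12⁻¹ * ‖H x - q x‖ + ‖fo x - Cf x‖ := hstep1
      _ ≤ 12⁻¹ * (((2:ℝ)^p + 33)/3 * θ * ((2:ℝ)^p)⁻¹ / (1 - 4 / 2^p) * ‖x‖^p)
          + 12⁻¹ * (((2:ℝ)^p + 33)/3 * θ * ((2:ℝ)^p)⁻¹ / (1 - 16 / 2^p) * ‖x‖^p)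
          + 3/2 * θ * ((2:ℝ)^p)⁻¹ / (1 - 8 / 2^p) * ‖x‖^p := by
            have h1 := mul_le_mul_of_nonneg_left hG' (by norm_num : (0:ℝ) ≤ 12⁻¹)
            have h2 := mul_le_mul_of_nonneg_left hH' (by norm_num : (0:ℝ) ≤ 12⁻¹)
            linarith
      _ = (12⁻¹ * (((2:ℝ)^p + 33)/3 * θ * ((2:ℝ)^p)⁻¹ / (1 - 4 / 2^p))
          + 12⁻¹ * (((2:ℝ)^p + 33)/3 * θ * ((2:ℝ)^p)⁻¹ / (1 - 16 / 2^p))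
          + 3/2 * θ * ((2:ℝ)^p)⁻¹ / (1 - 8 / 2^p)) * ‖x‖^p := by ring
      _ = _ := by rw [hKeq]
  refine ⟨Q₁, Cf, Q₂, hQ₁quad, hCcubic, hQ₂quart, hbound, ?_⟩
  -- uniqueness
  intro Q₁' C' Q₂' hq1' hc' hq2' hb'
  have hiterQ1' := scale_iter (isQuadratic_scale hq1')
  have hiterQ1 := scale_iter (isQuadratic_scale hQ₁quad)
  have hiterC' := scale_iter (isCubic_scale hc')
  have hiterC := scale_iter (isCubic_scale hCcubic)
  have hiterQ2' := scale_iter (isQuartic_scale hq2')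
  have hiterQ2 := scale_iter (isQuartic_scale hQ₂quart)
  obtain ⟨Δ, hΔ⟩ : ∃ D : X → Y,
      D = fun z => (Q₁' z - Q₁ z) + (C' z - Cf z) + (Q₂' z - Q₂ z) := ⟨_, rfl⟩
  set K : ℝ := ((33 + (2 : ℝ) ^ p) / 36 * (1 / ((2 : ℝ) ^ p - 4) + 1 / ((2 : ℝ) ^ p - 16)) +
      3 / (2 * ((2 : ℝ) ^ p - 8))) * θ with hK
  have hΔbnd : ∀ z : X, ‖Δ z‖ ≤ 2 * K * ‖z‖ ^ p := by
    intro z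
    have he : Δ z = (f z - Q₁ z - Cf z - Q₂ z) - (f z - Q₁' z - C' z - Q₂' z) := by
      rw [hΔ]; module
    rw [he]
    refine le_trans (norm_sub_le _ _) ?_
    have h1 := hb' z
    have h2 := hbound z
    linarith
  have hkey : ∀ x : X, (Q₁' x - Q₁ x = 0) ∧ (C' x - Cf x = 0) ∧ (Q₂' x - Q₂ x = 0) := by
    intro x
    apply abc_eq_zero
    have hfun : (fun n : ℕ => (4:ℝ)^n • (Q₁' x - Q₁ x) + (2:ℝ)^n • (C' x - Cf x)
        + (Q₂' x - Q₂ x)) = fun n : ℕ => (16:ℝ)^n • Δ (((2:ℝ)⁻¹)^n • x) := by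
      funext n
      have e4 : (4:ℝ)^n = 2^n * 2^n := by rw [← mul_pow]; norm_num
      have e8 : (8:ℝ)^n = 2^n * (2^n * 2^n) := by rw [← mul_pow, ← mul_pow]; norm_num
      have e16 : (16:ℝ)^n = 2^n * (2^n * (2^n * 2^n)) := by
        rw [← mul_pow, ← mul_pow, ← mul_pow]; norm_num
      rw [hΔ]
      rw [hiterQ1' n x, hiterQ1 n x, hiterC' n x, hiterC n x, hiterQ2' n x, hiterQ2 n x]
      rw [e4, e8, e16]
      module
    rw [hfun]
    have hbnd : ∀ n : ℕ, ‖(16:ℝ)^n • Δ (((2:ℝ)⁻¹)^n • x)‖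
        ≤ (2 * K * ‖x‖^p) * (16 / (2:ℝ)^p)^n := by
      intro n
      rw [norm_smul, Real.norm_eq_abs, abs_of_nonneg (by positivity)]
      calc (16:ℝ)^n * ‖Δ (((2:ℝ)⁻¹)^n • x)‖
          ≤ (16:ℝ)^n * (2 * K * ‖((2:ℝ)⁻¹)^n • x‖^p) :=
            mul_le_mul_of_nonneg_left (hΔbnd _) (by positivity)
        _ = (2 * K * ‖x‖^p) * (16 / (2:ℝ)^p)^n := by
            rw [norm_smul_pow_rpow x n, div_pow, inv_pow, div_eq_mul_inv]
            ring
    have hr1 : 16 / (2:ℝ)^p < 1 := (div_lt_one h2p0).2 h16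
    have hr0 : (0:ℝ) ≤ 16 / (2:ℝ)^p := by positivity
    have hg0' : Tendsto (fun n : ℕ => (2 * K * ‖x‖^p) * (16 / (2:ℝ)^p)^n) atTop (𝓝 0) := by
      simpa using tendsto_const_nhds.mul (tendsto_pow_atTop_nhds_zero_of_lt_one hr0 hr1)
    exact squeeze_zero_norm hbnd hg0'
  refine ⟨?_, ?_, ?_⟩
  · funext z; have := (hkey z).1; rwa [sub_eq_zero] at this
  · funext z; have := (hkey z).2.1; rwa [sub_eq_zero] at this
  · funext z; have := (hkey z).2.2; rwa [sub_eq_zero] at this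
end

section
/- Let X be a real vector space, Y a real Banach space, and let ε > 0 be a real number. Suppose f : X → Y satisfies f(0) = 0 and ‖D_f(x,y)‖ ≤ ε for all x, y ∈ X. Then there exist a unique quadratic function Q₁ : X → Y, a unique cubic function C : X → Y and a unique quartic function Q₂ : X → Y such that ‖f(x) − Q₁(x) − C(x) − Q₂(x)‖ ≤ (431/420)·ε for all x ∈ X. -/
/-!
Split `f` into even and odd parts. Evaluating `D` at `(y, y)` and `(0, y)` shows that the odd part
is almost `8`-homogeneous under doubling; evaluating it at `(2y, y)` and `(0, y)` bounds
`f (4y) - 20 f (2y) + 64 f y` for the even part, and since `t² - 20 t + 64 = (t - 4)(t - 16)` the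
even part is the sum of an almost `4`-homogeneous and an almost `16`-homogeneous function.
A Hyers-type limit `c⁻ⁿ φ (2ⁿ x)` replaces an almost `c`-homogeneous `φ` by a `c`-homogeneous `Φ`
at bounded distance. Then `(x, y) ↦ D_Φ (x, y)` is `c`-homogeneous and bounded, hence zero, and `Φ`
inherits the parity of `φ` because it is unique. For such `Φ`, `D_Φ (x, y) - D_Φ (0, y)` is three
times `E (x, y) - E (0, y)` for the symmetric fourth difference `E`, so `E (x, y) = E (0, y)`; with
homogeneity and parity this yields the quadratic, cubic and quartic equations.
Uniqueness: a bounded sum of a `4`-, an `8`- and a `16`-homogeneous function vanishes termwise.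
-/

open Filter Topology

def symmFourthDiff {X Y : Type*} [AddCommGroup X] [AddCommGroup Y] (F : X → Y) (x y : X) : Y :=
  F (x + 2 • y) + F (x - 2 • y) - 4 • (F (x + y) + F (x - y)) + 6 • F x

section Group

variable {X Y : Type*} [AddCommGroup X] [AddCommGroup Y]

lemma Dop_add (F G : X → Y) (x y : X) : Dop (F + G) x y = Dop F x y + Dop G x y := by
  simp only [Dop, Pi.add_apply, smul_add]
  abel

lemma Dop_sub (F G : X → Y) (x y : X) : Dop (F - G) x y = Dop F x y - Dop G x y := by
  simp only [Dop, Pi.sub_apply, smul_add, smul_sub]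
  abel

lemma Dop_comp_neg (F : X → Y) (x y : X) : Dop (fun z => F (-z)) x y = Dop F (-x) (-y) := by
  simp only [Dop, neg_add, neg_sub', smul_neg, sub_neg_eq_add]

lemma Dop_comp_two_nsmul (F : X → Y) (x y : X) :
    Dop (fun z => F (2 • z)) x y = Dop F (2 • x) (2 • y) := by
  simp only [Dop, smul_add, smul_sub, smul_comm 2 3 y]

lemma Dop_sub_Dop_zero_left (F : X → Y) (x y : X) :
    Dop F x y - Dop F 0 y = 3 • (symmFourthDiff F x y - symmFourthDiff F 0 y) := by
  unfold Dop symmFourthDiff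
  abel

end Group

section RealModule

variable {X Y : Type*} [AddCommGroup X] [AddCommGroup Y] [Module ℝ Y]

lemma Dop_smul (a : ℝ) (F : X → Y) (x y : X) : Dop (a • F) x y = a • Dop F x y := by
  simp only [Dop, Pi.smul_apply]
  module

lemma Dop_two_nsmul_of_doubling {F : X → Y} {c : ℝ} (h2 : ∀ w, F (2 • w) = c • F w)
    (x y : X) : Dop F (2 • x) (2 • y) = c • Dop F x y := by
  rw [← Dop_comp_two_nsmul, show (fun z => F (2 • z)) = c • F from funext h2, Dop_smul]

lemma map_zero_of_doubling {F : X → Y} {c : ℝ} (hc : c ≠ 1) (h2 : ∀ w, F (2 • w) = c • F w) :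
    F 0 = 0 := by
  have h : (1 - c) • F 0 = 0 := by
    linear_combination (norm := module) (by simpa using h2 0 : F 0 = c • F 0)
  exact (smul_eq_zero.mp h).resolve_left (sub_ne_zero.mpr hc.symm)

lemma symmFourthDiff_eq_of_Dop_eq_zero {F : X → Y} (hD : ∀ x y, Dop F x y = 0) (x y : X) :
    symmFourthDiff F x y = symmFourthDiff F 0 y := by
  have h := Dop_sub_Dop_zero_left F x y
  rw [hD, hD, sub_self] at h
  linear_combination (norm := module) (-1/3 : ℝ) • h

lemma symmFourthDiff_zero_left_of_doubling {F : X → Y} {c : ℝ} (h0 : F 0 = 0)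
    (h2 : ∀ w, F (2 • w) = c • F w) (y : X) :
    symmFourthDiff F 0 y = (c - 4) • (F y + F (-y)) := by
  unfold symmFourthDiff
  rw [zero_add, zero_sub, zero_add, zero_sub, ← smul_neg, h2, h2, h0]
  module

lemma isQuadratic_of_Dop_eq_zero {F : X → Y} (hD : ∀ x y, Dop F x y = 0)
    (h2 : ∀ w, F (2 • w) = (4 : ℝ) • F w) (heven : F.Even) : IsQuadratic F := by
  have hE (x y : X) : symmFourthDiff F x y = 0 := by
    rw [symmFourthDiff_eq_of_Dop_eq_zero hD, symmFourthDiff_zero_left_of_doubling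
      (map_zero_of_doubling (by norm_num) h2) h2]
    module
  intro x y
  have h := hE (2 • x) y
  have h' := hE y x
  unfold symmFourthDiff at h h'
  rw [← smul_add, ← smul_sub, h2, h2, h2] at h
  rw [← heven (y - 2 • x), ← heven (y - x), show -(y - 2 • x) = 2 • x - y by abel,
    show -(y - x) = x - y by abel, add_comm y, add_comm y] at h'
  linear_combination (norm := module) (-1/12 : ℝ) • h - (1/3 : ℝ) • h'

lemma isCubic_of_Dop_eq_zero {F : X → Y} (hD : ∀ x y, Dop F x y = 0)
    (h2 : ∀ w, F (2 • w) = (8 : ℝ) • F w) (hodd : F.Odd) : IsCubic F := by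
  have hE (x y : X) : symmFourthDiff F x y = 0 := by
    rw [symmFourthDiff_eq_of_Dop_eq_zero hD, symmFourthDiff_zero_left_of_doubling
      (map_zero_of_doubling (by norm_num) h2) h2, hodd, add_neg_cancel, smul_zero]
  intro x y
  have h := hE (2 • x) y
  unfold symmFourthDiff at h
  rw [← smul_add, ← smul_sub, h2, h2, h2] at h
  linear_combination (norm := module) (-1/4 : ℝ) • h

lemma isQuartic_of_Dop_eq_zero {F : X → Y} (hD : ∀ x y, Dop F x y = 0)
    (h2 : ∀ w, F (2 • w) = (16 : ℝ) • F w) (heven : F.Even) : IsQuartic F := by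
  intro x y
  have h := symmFourthDiff_eq_of_Dop_eq_zero hD y x
  rw [symmFourthDiff_zero_left_of_doubling (map_zero_of_doubling (by norm_num) h2) h2,
    heven] at h
  unfold symmFourthDiff at h
  rw [← heven (y - 2 • x), ← heven (y - x), show -(y - 2 • x) = 2 • x - y by abel,
    show -(y - x) = x - y by abel, add_comm y, add_comm y] at h
  linear_combination (norm := module) h

lemma IsQuadratic.map_two_nsmul {Q : X → Y} (hQ : IsQuadratic Q) (x : X) :
    Q (2 • x) = (4 : ℝ) • Q x := by
  have h0 := hQ 0 0
  have hx := hQ x x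
  rw [add_zero, sub_zero] at h0
  rw [← two_nsmul, sub_self] at hx
  linear_combination (norm := module) hx + (1/2 : ℝ) • h0

lemma IsCubic.map_two_nsmul {C : X → Y} (hC : IsCubic C) (x : X) :
    C (2 • x) = (8 : ℝ) • C x := by
  have h := hC x 0
  rw [add_zero, sub_zero, add_zero, sub_zero] at h
  linear_combination (norm := module) (1/2 : ℝ) • h

lemma IsQuartic.map_two_nsmul {q : X → Y} (hq : IsQuartic q) (x : X) :
    q (2 • x) = (16 : ℝ) • q x := by
  have h0 := hq 0 0
  have hx := hq x 0
  simp only [smul_zero, add_zero, sub_zero] at h0 hx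
  linear_combination (norm := module) (1/2 : ℝ) • hx + (1/8 : ℝ) • h0

end RealModule

lemma map_two_pow_nsmul_of_doubling {G Y : Type*} [AddMonoid G] [AddCommGroup Y] [Module ℝ Y]
    {u : G → Y} {c : ℝ} (h2 : ∀ x, u (2 • x) = c • u x)
    (n : ℕ) (x : G) : u (2 ^ n • x) = c ^ n • u x := by
  induction n with
  | zero => simp
  | succ n ih => rw [pow_succ, mul_nsmul, h2, ih, pow_succ', mul_smul]

section Doubling

variable {G Y : Type*} [AddMonoid G] [NormedAddCommGroup Y] [NormedSpace ℝ Y]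

lemma eq_zero_of_doubling_of_bounded {u : G → Y} {c B : ℝ} (hc : 1 < c)
    (h2 : ∀ x, u (2 • x) = c • u x) (hB : ∀ x, ‖u x‖ ≤ B) (x : G) : u x = 0 := by
  by_contra hx
  have hpos : 0 < ‖u x‖ := norm_pos_iff.mpr hx
  obtain ⟨n, hn⟩ := pow_unbounded_of_one_lt (B / ‖u x‖) hc
  have h := hB (2 ^ n • x)
  rw [map_two_pow_nsmul_of_doubling h2, norm_smul, Real.norm_of_nonneg (by positivity)] at h
  exact (div_lt_iff₀ hpos).mp hn |>.not_ge h

lemma eq_of_doubling_of_bounded_sub {Φ Ψ : G → Y} {c B : ℝ} (hc : 1 < c)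
    (hΦ : ∀ x, Φ (2 • x) = c • Φ x) (hΨ : ∀ x, Ψ (2 • x) = c • Ψ x)
    (hB : ∀ x, ‖Φ x - Ψ x‖ ≤ B) : Φ = Ψ :=
  funext fun x => sub_eq_zero.mp <| eq_zero_of_doubling_of_bounded (u := Φ - Ψ) hc
    (fun w => by simp only [Pi.sub_apply, hΦ, hΨ, smul_sub]) hB x

lemma eq_zero_of_doubling_four_eight_sixteen {u v w : G → Y} {B : ℝ}
    (hu : ∀ x, u (2 • x) = (4 : ℝ) • u x) (hv : ∀ x, v (2 • x) = (8 : ℝ) • v x)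
    (hw : ∀ x, w (2 • x) = (16 : ℝ) • w x) (hB : ∀ x, ‖u x + v x + w x‖ ≤ B) :
    u = 0 ∧ v = 0 ∧ w = 0 := by
  have hsmul (a : ℝ) (x : G) : ‖a • (u x + v x + w x)‖ ≤ |a| * B := by
    rw [norm_smul, Real.norm_eq_abs]; exact mul_le_mul_of_nonneg_left (hB x) (abs_nonneg a)
  have hw0 : w = 0 := funext <| eq_zero_of_doubling_of_bounded (by norm_num) hw fun x => by
    -- `(T - 4)(T - 8)`, with `T s = s (2 ·)`, kills `u` and `v` and multiplies `w` by `96`.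
    have h : w x = (96⁻¹ : ℝ) • (u (2 • 2 • x) + v (2 • 2 • x) + w (2 • 2 • x))
        - (8⁻¹ : ℝ) • (u (2 • x) + v (2 • x) + w (2 • x)) + (3⁻¹ : ℝ) • (u x + v x + w x) := by
      simp only [hu, hv, hw]; module
    rw [h]
    exact (norm_add_le _ _).trans
      (add_le_add ((norm_sub_le _ _).trans (add_le_add (hsmul _ _) (hsmul _ _))) (hsmul _ _))
  have hv0 : v = 0 := funext <| eq_zero_of_doubling_of_bounded (by norm_num) hv fun x => by
    have h : v x = (4⁻¹ : ℝ) • (u (2 • x) + v (2 • x) + w (2 • x)) - (u x + v x + w x) := by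
      simp only [hu, hv, hw0, Pi.zero_apply]; module
    rw [h]
    exact (norm_sub_le _ _).trans (add_le_add (hsmul _ _) (hB x))
  have hu0 : u = 0 := funext <| eq_zero_of_doubling_of_bounded (by norm_num) hu fun x => by
    simpa [hv0, hw0] using hB x
  exact ⟨hu0, hv0, hw0⟩

lemma exists_doubling_approx [CompleteSpace Y] {φ : G → Y} {c K : ℝ} (hc : 1 < c)
    (hφ : ∀ x, ‖φ (2 • x) - c • φ x‖ ≤ K) :
    ∃ Φ : G → Y, (∀ x, Φ (2 • x) = c • Φ x) ∧ ∀ x, ‖φ x - Φ x‖ ≤ K / (c - 1) := by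
  have hc0 : c ≠ 0 := (one_pos.trans hc).ne'
  let s (x : G) (n : ℕ) : Y := c⁻¹ ^ n • φ (2 ^ n • x)
  have hstep (x : G) (n : ℕ) : dist (s x n) (s x (n + 1)) ≤ K / c * c⁻¹ ^ n := by
    have hcc : c⁻¹ ^ (n + 1) * c = c⁻¹ ^ n := by
      rw [pow_succ, mul_assoc, inv_mul_cancel₀ hc0, mul_one]
    have h : s x (n + 1) - s x n = c⁻¹ ^ (n + 1) • (φ (2 • 2 ^ n • x) - c • φ (2 ^ n • x)) := by
      rw [smul_sub, ← mul_smul _ c, hcc, ← mul_nsmul, ← pow_succ]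
    rw [dist_comm, dist_eq_norm, h, norm_smul, Real.norm_of_nonneg (by positivity)]
    calc c⁻¹ ^ (n + 1) * ‖φ (2 • 2 ^ n • x) - c • φ (2 ^ n • x)‖ ≤ c⁻¹ ^ (n + 1) * K := by
          gcongr; exact hφ _
      _ = K / c * c⁻¹ ^ n := by ring
  have hr : c⁻¹ < 1 := inv_lt_one_of_one_lt₀ hc
  have hlim (x : G) : ∃ L, Tendsto (s x) atTop (𝓝 L) :=
    cauchySeq_tendsto_of_complete (cauchySeq_of_le_geometric _ _ hr (hstep x))
  choose Φ hΦ using hlim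
  refine ⟨Φ, fun x => ?_, fun x => ?_⟩
  · have h : s (2 • x) = fun n => c • s x (n + 1) := by
      funext n
      have hcc : c * c⁻¹ ^ (n + 1) = c⁻¹ ^ n := by
        rw [pow_succ', ← mul_assoc, mul_inv_cancel₀ hc0, one_mul]
      rw [← mul_smul c, hcc, pow_succ, mul_nsmul, smul_comm 2 (2 ^ n) x]
    refine tendsto_nhds_unique (hΦ (2 • x)) ?_
    rw [h]
    exact ((hΦ x).comp (tendsto_add_atTop_nat 1)).const_smul c
  · have h := dist_le_of_le_geometric_of_tendsto₀ _ _ hr (hstep x) (hΦ x)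
    have hK : K / c / (1 - c⁻¹) = K / (c - 1) := by
      field_simp
    simpa [s, dist_eq_norm, hK] using h

end Doubling

lemma norm_Dop_le {X Y : Type*} [AddCommGroup X] [NormedAddCommGroup Y] {F : X → Y} {B : ℝ}
    (hF : ∀ x, ‖F x‖ ≤ B) (x y : X) :
    ‖Dop F x y‖ ≤ 106 * B := by
  have hn (n : ℕ) (a b : X) : ‖n • (F a + F b)‖ ≤ n * (B + B) :=
    (norm_nsmul_le ..).trans (by gcongr; exact (norm_add_le _ _).trans (add_le_add (hF a) (hF b)))
  have hn' (n : ℕ) (a : X) : ‖n • F a‖ ≤ n * B := (norm_nsmul_le ..).trans (by gcongr; exact hF a)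
  unfold Dop
  calc _ ≤ 3 * (B + B) + 12 * (B + B) + 4 * B + 18 * B + 36 * B + 18 * B := by
        refine (norm_add_le _ _).trans (add_le_add ?_ (hn' 18 x))
        refine (norm_sub_le _ _).trans (add_le_add ?_ (hn' 36 y))
        refine (norm_add_le _ _).trans (add_le_add ?_ (hn' 18 _))
        refine (norm_sub_le _ _).trans (add_le_add ?_ (hn' 4 _))
        exact (norm_sub_le _ _).trans (add_le_add (hn 3 _ _) (hn 12 _ _))
    _ = 106 * B := by ring

section Normed

variable {X Y : Type*} [AddCommGroup X] [NormedAddCommGroup Y] [NormedSpace ℝ Y]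

lemma norm_smul_add_smul_le {u v : Y} {A B : ℝ} (a b : ℝ) (hu : ‖u‖ ≤ A) (hv : ‖v‖ ≤ B) :
    ‖a • u + b • v‖ ≤ |a| * A + |b| * B := by
  refine (norm_add_le _ _).trans (add_le_add ?_ ?_) <;> rw [norm_smul, Real.norm_eq_abs] <;>
    gcongr

lemma Dop_eq_zero_of_doubling_approx {φ Φ : X → Y} {c B M : ℝ} (hc : 1 < c)
    (h2 : ∀ w, Φ (2 • w) = c • Φ w) (hB : ∀ w, ‖φ w - Φ w‖ ≤ B)
    (hM : ∀ x y, ‖Dop φ x y‖ ≤ M) (x y : X) : Dop Φ x y = 0 := by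
  refine eq_zero_of_doubling_of_bounded (u := fun p : X × X => Dop Φ p.1 p.2) (B := M + 106 * B) hc
    (fun p => Dop_two_nsmul_of_doubling h2 p.1 p.2) (fun p => ?_) (x, y)
  have h := norm_Dop_le (F := φ - Φ) hB p.1 p.2
  rw [Dop_sub] at h
  calc ‖Dop Φ p.1 p.2‖ = ‖Dop φ p.1 p.2 - (Dop φ p.1 p.2 - Dop Φ p.1 p.2)‖ := by
        rw [sub_sub_cancel]
    _ ≤ M + 106 * B := (norm_sub_le _ _).trans (add_le_add (hM _ _) h)

lemma even_of_doubling_approx {φ Φ : X → Y} {c B : ℝ} (hφ : φ.Even) (hc : 1 < c)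
    (h2 : ∀ w, Φ (2 • w) = c • Φ w) (hB : ∀ w, ‖φ w - Φ w‖ ≤ B) : Φ.Even := by
  have h := eq_of_doubling_of_bounded_sub hc h2 (Ψ := fun w => Φ (-w))
    (fun w => by rw [← smul_neg, h2]) (B := B + B) fun w => by
      rw [show Φ w - Φ (-w) = (φ (-w) - Φ (-w)) - (φ w - Φ w) by rw [hφ]; abel]
      exact (norm_sub_le _ _).trans (add_le_add (hB _) (hB _))
  exact fun w => (congrFun h w).symm

lemma odd_of_doubling_approx {φ Φ : X → Y} {c B : ℝ} (hφ : φ.Odd) (hc : 1 < c)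
    (h2 : ∀ w, Φ (2 • w) = c • Φ w) (hB : ∀ w, ‖φ w - Φ w‖ ≤ B) : Φ.Odd := by
  have h := eq_of_doubling_of_bounded_sub hc h2 (Ψ := fun w => -Φ (-w))
    (fun w => by rw [← smul_neg, h2, smul_neg]) (B := B + B) fun w => by
      rw [show Φ w - -Φ (-w) = -(φ (-w) - Φ (-w)) - (φ w - Φ w) by rw [hφ]; abel]
      exact (norm_sub_le _ _).trans (add_le_add ((norm_neg _).trans_le (hB _)) (hB _))
  exact fun w => by rw [congrFun h w, neg_neg]

end Normed

section Stability

variable {X Y : Type*} [AddCommGroup X] [NormedAddCommGroup Y] [NormedSpace ℝ Y]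

lemma exists_isQuadratic_approx [CompleteSpace Y] {φ : X → Y} {K M : ℝ} (heven : φ.Even)
    (hK : ∀ x, ‖φ (2 • x) - (4 : ℝ) • φ x‖ ≤ K) (hM : ∀ x y, ‖Dop φ x y‖ ≤ M) :
    ∃ Q, IsQuadratic Q ∧ ∀ x, ‖φ x - Q x‖ ≤ K / 3 := by
  obtain ⟨Q, h2, hQ⟩ := exists_doubling_approx (by norm_num : (1 : ℝ) < 4) hK
  refine ⟨Q, isQuadratic_of_Dop_eq_zero (Dop_eq_zero_of_doubling_approx (by norm_num) h2 hQ hM)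
    h2 (even_of_doubling_approx heven (by norm_num) h2 hQ), fun x => (hQ x).trans_eq ?_⟩
  norm_num

lemma exists_isCubic_approx [CompleteSpace Y] {φ : X → Y} {K M : ℝ} (hodd : φ.Odd)
    (hK : ∀ x, ‖φ (2 • x) - (8 : ℝ) • φ x‖ ≤ K) (hM : ∀ x y, ‖Dop φ x y‖ ≤ M) :
    ∃ C, IsCubic C ∧ ∀ x, ‖φ x - C x‖ ≤ K / 7 := by
  obtain ⟨C, h2, hC⟩ := exists_doubling_approx (by norm_num : (1 : ℝ) < 8) hK
  refine ⟨C, isCubic_of_Dop_eq_zero (Dop_eq_zero_of_doubling_approx (by norm_num) h2 hC hM)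
    h2 (odd_of_doubling_approx hodd (by norm_num) h2 hC), fun x => (hC x).trans_eq ?_⟩
  norm_num

lemma exists_isQuartic_approx [CompleteSpace Y] {φ : X → Y} {K M : ℝ} (heven : φ.Even)
    (hK : ∀ x, ‖φ (2 • x) - (16 : ℝ) • φ x‖ ≤ K) (hM : ∀ x y, ‖Dop φ x y‖ ≤ M) :
    ∃ Q, IsQuartic Q ∧ ∀ x, ‖φ x - Q x‖ ≤ K / 15 := by
  obtain ⟨Q, h2, hQ⟩ := exists_doubling_approx (by norm_num : (1 : ℝ) < 16) hK
  refine ⟨Q, isQuartic_of_Dop_eq_zero (Dop_eq_zero_of_doubling_approx (by norm_num) h2 hQ hM)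
    h2 (even_of_doubling_approx heven (by norm_num) h2 hQ), fun x => (hQ x).trans_eq ?_⟩
  norm_num

variable {F : X → Y} {ε : ℝ}

lemma norm_doubling_defect_le_of_odd (hodd : F.Odd) (h0 : F 0 = 0)
    (hD : ∀ x y, ‖Dop F x y‖ ≤ ε) (y : X) : ‖F (2 • y) - (8 : ℝ) • F y‖ ≤ 5 / 6 * ε := by
  have h : (6 : ℝ) • (F (2 • y) - (8 : ℝ) • F y) = 4 • Dop F y y - Dop F 0 y := by
    unfold Dop
    rw [show y + 2 • y = 3 • y by module, show y - 2 • y = -y by module, ← two_nsmul, sub_self,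
      zero_add, zero_sub, zero_add, zero_sub, hodd, hodd, h0]
    module
  have hn : ‖4 • Dop F y y - Dop F 0 y‖ ≤ 4 * ε + ε :=
    (norm_sub_le _ _).trans
      (add_le_add ((norm_nsmul_le ..).trans (by push_cast; gcongr; exact hD _ _)) (hD _ _))
  rw [← h, norm_smul, Real.norm_of_nonneg (by norm_num)] at hn
  linarith

lemma norm_doubling_defect_le_of_even (heven : F.Even) (h0 : F 0 = 0)
    (hD : ∀ x y, ‖Dop F x y‖ ≤ ε) (y : X) :
    ‖F (2 • 2 • y) - (20 : ℝ) • F (2 • y) + (64 : ℝ) • F y‖ ≤ 5 / 3 * ε := by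
  have h : (3 : ℝ) • (F (2 • 2 • y) - (20 : ℝ) • F (2 • y) + (64 : ℝ) • F y) =
      Dop F (2 • y) y - 4 • Dop F 0 y := by
    unfold Dop
    rw [show 2 • y + 2 • y = 2 • 2 • y by module, show 2 • y + y = 3 • y by module,
      show 2 • y - y = y by module, sub_self, zero_add, zero_sub, zero_add, zero_sub, heven,
      heven, h0]
    module
  have hn : ‖Dop F (2 • y) y - 4 • Dop F 0 y‖ ≤ ε + 4 * ε :=
    (norm_sub_le _ _).trans (add_le_add (hD _ _)
      ((norm_nsmul_le ..).trans (by push_cast; gcongr; exact hD _ _)))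
  rw [← h, norm_smul, Real.norm_of_nonneg (by norm_num)] at hn
  linarith

lemma exists_quadratic_quartic_approx_of_even [CompleteSpace Y] (heven : F.Even) (h0 : F 0 = 0)
    (hD : ∀ x y, ‖Dop F x y‖ ≤ ε) :
    ∃ Q₁ Q₂, IsQuadratic Q₁ ∧ IsQuartic Q₂ ∧ ∀ x, ‖F x - Q₁ x - Q₂ x‖ ≤ ε / 18 := by
  -- Partial fractions `1 = ((16 - T) + (T - 4)) / 12` for the doubling operator `T F = F (2 ·)`.
  set F₂ : X → Y := (4 / 3 : ℝ) • F + (-12⁻¹ : ℝ) • fun z => F (2 • z)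
  set F₄ : X → Y := (-3⁻¹ : ℝ) • F + (12⁻¹ : ℝ) • fun z => F (2 • z)
  have hF : ∀ x, F x = F₂ x + F₄ x := fun x => by
    simp only [F₂, F₄, Pi.add_apply, Pi.smul_apply]
    module
  have hF₂ : F₂.Even := fun x => by simp [F₂, heven x, heven (2 • x)]
  have hF₄ : F₄.Even := fun x => by simp [F₄, heven x, heven (2 • x)]
  have hD₂ (x y : X) : ‖Dop F₂ x y‖ ≤ |4 / 3| * ε + |-12⁻¹| * ε := by
    rw [Dop_add, Dop_smul, Dop_smul, Dop_comp_two_nsmul]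
    exact norm_smul_add_smul_le _ _ (hD _ _) (hD _ _)
  have hD₄ (x y : X) : ‖Dop F₄ x y‖ ≤ |-3⁻¹| * ε + |12⁻¹| * ε := by
    rw [Dop_add, Dop_smul, Dop_smul, Dop_comp_two_nsmul]
    exact norm_smul_add_smul_le _ _ (hD _ _) (hD _ _)
  have hdefect := norm_doubling_defect_le_of_even heven h0 hD
  have hK₂ (x : X) : ‖F₂ (2 • x) - (4 : ℝ) • F₂ x‖ ≤ 5 / 36 * ε := by
    rw [show F₂ (2 • x) - (4 : ℝ) • F₂ x =
        (-12⁻¹ : ℝ) • (F (2 • 2 • x) - (20 : ℝ) • F (2 • x) + (64 : ℝ) • F x) by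
      simp only [F₂, Pi.add_apply, Pi.smul_apply]; module, norm_smul]
    norm_num
    linarith [hdefect x]
  have hK₄ (x : X) : ‖F₄ (2 • x) - (16 : ℝ) • F₄ x‖ ≤ 5 / 36 * ε := by
    rw [show F₄ (2 • x) - (16 : ℝ) • F₄ x =
        (12⁻¹ : ℝ) • (F (2 • 2 • x) - (20 : ℝ) • F (2 • x) + (64 : ℝ) • F x) by
      simp only [F₄, Pi.add_apply, Pi.smul_apply]; module, norm_smul]
    norm_num
    linarith [hdefect x]
  obtain ⟨Q₁, hQ₁, h₁⟩ := exists_isQuadratic_approx hF₂ hK₂ hD₂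
  obtain ⟨Q₂, hQ₂, h₂⟩ := exists_isQuartic_approx hF₄ hK₄ hD₄
  refine ⟨Q₁, Q₂, hQ₁, hQ₂, fun x => ?_⟩
  rw [hF, show F₂ x + F₄ x - Q₁ x - Q₂ x = (F₂ x - Q₁ x) + (F₄ x - Q₂ x) by abel]
  linarith [norm_add_le (F₂ x - Q₁ x) (F₄ x - Q₂ x), h₁ x, h₂ x]

end Stability

section Main

variable {X Y : Type*} [AddCommGroup X] [NormedAddCommGroup Y] [NormedSpace ℝ Y]

lemma exists_approx_quadratic_cubic_quartic [CompleteSpace Y] {f : X → Y} {ε : ℝ}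
    (hf0 : f 0 = 0) (hbd : ∀ x y, ‖Dop f x y‖ ≤ ε) :
    ∃ Q₁ C Q₂, IsQuadratic Q₁ ∧ IsCubic C ∧ IsQuartic Q₂ ∧
      ∀ x, ‖f x - Q₁ x - C x - Q₂ x‖ ≤ 11 / 63 * ε := by
  set fe : X → Y := (2⁻¹ : ℝ) • f + (2⁻¹ : ℝ) • fun z => f (-z)
  set fo : X → Y := (2⁻¹ : ℝ) • f + (-2⁻¹ : ℝ) • fun z => f (-z)
  have hDfe (x y : X) : ‖Dop fe x y‖ ≤ ε := by
    rw [Dop_add, Dop_smul, Dop_smul, Dop_comp_neg]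
    exact (norm_smul_add_smul_le _ _ (hbd _ _) (hbd _ _)).trans_eq (by norm_num; ring)
  have hDfo (x y : X) : ‖Dop fo x y‖ ≤ ε := by
    rw [Dop_add, Dop_smul, Dop_smul, Dop_comp_neg]
    exact (norm_smul_add_smul_le _ _ (hbd _ _) (hbd _ _)).trans_eq (by norm_num; ring)
  have hfe : fe.Even := fun x => by simp [fe, add_comm]
  have hfo : fo.Odd := fun x => by simp only [fo, Pi.add_apply, Pi.smul_apply, neg_neg]; module
  obtain ⟨Q₁, Q₂, hQ₁, hQ₂, he⟩ :=
    exists_quadratic_quartic_approx_of_even hfe (by simp [fe, hf0]) hDfe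
  obtain ⟨C, hC, ho⟩ := exists_isCubic_approx hfo
    (norm_doubling_defect_le_of_odd hfo (by simp [fo, hf0]) hDfo) hDfo
  refine ⟨Q₁, C, Q₂, hQ₁, hC, hQ₂, fun x => ?_⟩
  have h : f x - Q₁ x - C x - Q₂ x = (fe x - Q₁ x - Q₂ x) + (fo x - C x) := by
    simp only [fe, fo, Pi.add_apply, Pi.smul_apply]
    module
  rw [h]
  linarith [norm_add_le (fe x - Q₁ x - Q₂ x) (fo x - C x), he x, ho x]

lemma eq_of_approx_quadratic_cubic_quartic {f Q₁ C Q₂ Q₁' C' Q₂' : X → Y} {B B' : ℝ}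
    (hQ₁ : IsQuadratic Q₁) (hC : IsCubic C) (hQ₂ : IsQuartic Q₂)
    (hQ₁' : IsQuadratic Q₁') (hC' : IsCubic C') (hQ₂' : IsQuartic Q₂')
    (hf : ∀ x, ‖f x - Q₁ x - C x - Q₂ x‖ ≤ B) (hf' : ∀ x, ‖f x - Q₁' x - C' x - Q₂' x‖ ≤ B') :
    Q₁' = Q₁ ∧ C' = C ∧ Q₂' = Q₂ := by
  obtain ⟨h₁, h₂, h₃⟩ := eq_zero_of_doubling_four_eight_sixteen (u := Q₁' - Q₁) (v := C' - C)
    (w := Q₂' - Q₂) (B := B + B')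
    (fun x => by simp only [Pi.sub_apply, hQ₁.map_two_nsmul, hQ₁'.map_two_nsmul, smul_sub])
    (fun x => by simp only [Pi.sub_apply, hC.map_two_nsmul, hC'.map_two_nsmul, smul_sub])
    (fun x => by simp only [Pi.sub_apply, hQ₂.map_two_nsmul, hQ₂'.map_two_nsmul, smul_sub])
    fun x => by
      rw [show (Q₁' - Q₁) x + (C' - C) x + (Q₂' - Q₂) x =
        (f x - Q₁ x - C x - Q₂ x) - (f x - Q₁' x - C' x - Q₂' x) by simp only [Pi.sub_apply]; abel]
      exact (norm_sub_le _ _).trans (add_le_add (hf x) (hf' x))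
  exact ⟨sub_eq_zero.mp h₁, sub_eq_zero.mp h₂, sub_eq_zero.mp h₃⟩

end Main

theorem stmt_18_general {X Y : Type*} [AddCommGroup X]
    [NormedAddCommGroup Y] [NormedSpace ℝ Y] [CompleteSpace Y]
    (ε : ℝ)
    (f : X → Y) (hf0 : f 0 = 0)
    (hbd : ∀ x y : X, ‖Dop f x y‖ ≤ ε) :
    ∃ (Q₁ C Q₂ : X → Y),
      IsQuadratic Q₁ ∧ IsCubic C ∧ IsQuartic Q₂ ∧
      (∀ x : X, ‖f x - Q₁ x - C x - Q₂ x‖ ≤ (431 / 420) * ε) ∧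
      (∀ Q₁' C' Q₂' : X → Y, IsQuadratic Q₁' → IsCubic C' → IsQuartic Q₂' →
        (∀ x : X, ‖f x - Q₁' x - C' x - Q₂' x‖ ≤ (431 / 420) * ε) →
        Q₁' = Q₁ ∧ C' = C ∧ Q₂' = Q₂) := by
  obtain ⟨Q₁, C, Q₂, hQ₁, hC, hQ₂, hf⟩ := exists_approx_quadratic_cubic_quartic hf0 hbd
  have hε : 0 ≤ ε := (norm_nonneg _).trans (hbd 0 0)
  refine ⟨Q₁, C, Q₂, hQ₁, hC, hQ₂, fun x => (hf x).trans (by linarith), ?_⟩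
  intro Q₁' C' Q₂' hQ₁' hC' hQ₂' hf'
  exact eq_of_approx_quadratic_cubic_quartic hQ₁ hC hQ₂ hQ₁' hC' hQ₂' hf hf'

theorem stmt_18 {X Y : Type*} [AddCommGroup X] [Module ℝ X]
    [NormedAddCommGroup Y] [NormedSpace ℝ Y] [CompleteSpace Y]
    (ε : ℝ) (hε : 0 < ε)
    (f : X → Y) (hf0 : f 0 = 0)
    (hbd : ∀ x y : X, ‖Dop f x y‖ ≤ ε) :
    ∃ (Q₁ C Q₂ : X → Y),
      IsQuadratic Q₁ ∧ IsCubic C ∧ IsQuartic Q₂ ∧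
      (∀ x : X, ‖f x - Q₁ x - C x - Q₂ x‖ ≤ (431 / 420) * ε) ∧
      (∀ Q₁' C' Q₂' : X → Y, IsQuadratic Q₁' → IsCubic C' → IsQuartic Q₂' →
        (∀ x : X, ‖f x - Q₁' x - C' x - Q₂' x‖ ≤ (431 / 420) * ε) →
        Q₁' = Q₁ ∧ C' = C ∧ Q₂' = Q₂) :=
  stmt_18_general ε f hf0 hbd
end
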